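/- arXiv:2009.06612 — 3 statements merged into one kernel-verified Lean document; each statement's English description precedes it below -/
import Mathlib

section
/- For every integer n > 1, the sum over all weakly decreasing tuples (λ₁, λ₂, ..., λₙ) of nonnegative integers with λ₁ + λ₂ + ... + λₙ = n and λ₁ odd of the product C(λ₁,λ₂)·C(λ₂,λ₃)···C(λₙ,0) equals 2^(n-2). -/
/-! Write `W(l, s, b)` for the sum of `C(b, u₁) · binomProd u` over weakly decreasing
`u : Fin l → ℕ` of sum `s`: the total weight of the tuples `(b, u₁, …, u_l)`. Splitting off the
first entry `a` of `u` gives `W(l + 1, s, b) = ∑ₐ C(b, a) · W(l, s - a, a)`, and Vandermonde's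
identity turns this recursion into `W(l, s, b) = C(b + s - 1, s)` as long as `s ≤ l`. In the
theorem the tuples with first entry `a` contribute `W(n - 1, n - a, a) = C(n - 1, a - 1)`;
summing over odd `a` leaves the sum of the even-indexed binomial coefficients `C(n - 1, k)`,
which is `2 ^ (n - 2)`. -/

open Finset

/-- Weakly decreasing tuples `(λ₁,…,λₙ)` of nonnegative integers with `λ₁+⋯+λₙ = n`. -/
def partitionTuples (n : ℕ) : Finset (Fin n → ℕ) :=
  (Finset.Nat.antidiagonalTuple n n).filter fun t => ∀ i j : Fin n, i ≤ j → t j ≤ t i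

/-- The product `C(λ₁,λ₂)·C(λ₂,λ₃)⋯C(λₙ,0)` with the convention `λ_{n+1} = 0`. -/
def binomProd (n : ℕ) (t : Fin n → ℕ) : ℕ :=
  ∏ i : Fin n, Nat.choose (t i) (if h : (i : ℕ) + 1 < n then t ⟨(i : ℕ) + 1, h⟩ else 0)

lemma Fin.antitone_cons_iff {α : Type*} [Preorder α] {n : ℕ} {u : Fin n → α} {a : α} :
    Antitone (Fin.cons a u : Fin (n + 1) → α) ↔ (∀ i, u i ≤ a) ∧ Antitone u := by
  simpa [Relator.LiftFun, antitone_iff_forall_lt] using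
    Fin.liftFun_cons (α := α) (· ≥ ·) (a := a) (f := u)

lemma sum_filter_even_choose {m : ℕ} (hm : m ≠ 0) :
    ∑ k ∈ range (m + 1) with Even k, m.choose k = 2 ^ (m - 1) := by
  have key : (2 : ℤ) * ∑ k ∈ range (m + 1) with Even k, (m.choose k : ℤ) = 2 ^ m := by
    calc (2 : ℤ) * ∑ k ∈ range (m + 1) with Even k, (m.choose k : ℤ)
        = ∑ k ∈ range (m + 1), ((-1 : ℤ) ^ k * m.choose k + m.choose k) := by
          rw [sum_filter, mul_sum]
          refine sum_congr rfl fun k _ => ?_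
          rcases k.even_or_odd with hk | hk
          · rw [if_pos hk, hk.neg_one_pow]; ring
          · rw [if_neg (Nat.not_even_iff_odd.2 hk), hk.neg_one_pow]; ring
      _ = 2 ^ m := by
          rw [sum_add_distrib, Int.alternating_sum_range_choose_of_ne hm, zero_add]
          exact_mod_cast Nat.sum_range_choose m
  rw [← mul_pow_sub_one hm] at key
  exact_mod_cast mul_left_cancel₀ two_ne_zero key

def antitoneTuples (l s : ℕ) : Finset (Fin l → ℕ) :=
  (Finset.Nat.antidiagonalTuple l s).filter Antitone

def headOrZero {l : ℕ} (t : Fin l → ℕ) : ℕ := if h : 0 < l then t ⟨0, h⟩ else 0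

section

variable {l s a : ℕ}

lemma mem_antitoneTuples {t : Fin l → ℕ} :
    t ∈ antitoneTuples l s ↔ ∑ i, t i = s ∧ Antitone t := by
  rw [antitoneTuples, mem_filter, Nat.mem_antidiagonalTuple]

lemma partitionTuples_eq_antitoneTuples (n : ℕ) : partitionTuples n = antitoneTuples n n := by
  ext t
  simp [partitionTuples, antitoneTuples, Antitone]

lemma antitoneTuples_zero (l : ℕ) : antitoneTuples l 0 = {0} := by
  ext t
  simp only [mem_antitoneTuples, sum_eq_zero_iff, mem_univ, true_implies, mem_singleton,
    funext_iff, Pi.zero_apply]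
  exact ⟨fun h => h.1, fun h => ⟨h, fun i j _ => by simp [h]⟩⟩

lemma headOrZero_cons (a : ℕ) (u : Fin l → ℕ) :
    headOrZero (Fin.cons a u : Fin (l + 1) → ℕ) = a := by
  simp [headOrZero]

lemma le_headOrZero {t : Fin l → ℕ} (ht : Antitone t) (i : Fin l) : t i ≤ headOrZero t := by
  rw [headOrZero, dif_pos i.pos]
  exact ht (Nat.zero_le _)

lemma forall_le_iff_headOrZero_le {u : Fin l → ℕ} (hu : Antitone u) :
    (∀ i, u i ≤ a) ↔ headOrZero u ≤ a := by
  refine ⟨fun h => ?_, fun h i => (le_headOrZero hu i).trans h⟩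
  unfold headOrZero
  split_ifs
  exacts [h _, Nat.zero_le a]

lemma cons_mem_antitoneTuples {u : Fin l → ℕ} :
    Fin.cons a u ∈ antitoneTuples (l + 1) s ↔
      a ≤ s ∧ u ∈ antitoneTuples l (s - a) ∧ headOrZero u ≤ a := by
  simp only [mem_antitoneTuples, Fin.sum_cons, Fin.antitone_cons_iff]
  constructor
  · rintro ⟨hsum, hle, hu⟩
    exact ⟨by omega, ⟨by omega, hu⟩, (forall_le_iff_headOrZero_le hu).1 hle⟩
  · rintro ⟨has, ⟨hsum, hu⟩, hle⟩
    exact ⟨by omega, (forall_le_iff_headOrZero_le hu).2 hle, hu⟩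

lemma sum_antitoneTuples_succ {M : Type*} [AddCommMonoid M] (l s : ℕ)
    (f : (Fin (l + 1) → ℕ) → M) :
    ∑ t ∈ antitoneTuples (l + 1) s, f t =
      ∑ a ∈ range (s + 1), ∑ u ∈ antitoneTuples l (s - a) with headOrZero u ≤ a,
        f (Fin.cons a u) := by
  rw [sum_sigma']
  refine sum_bij' (fun t _ => ⟨t 0, Fin.tail t⟩) (fun p _ => Fin.cons p.1 p.2)
    (fun t ht => ?_) (fun p hp => ?_) (fun t _ => Fin.cons_self_tail t)
    (fun p _ => by simp) (fun t _ => by rw [Fin.cons_self_tail])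
  · rw [← Fin.cons_self_tail t, cons_mem_antitoneTuples] at ht
    simpa [Nat.lt_succ_iff] using ht
  · simp only [mem_sigma, mem_range, mem_filter] at hp
    exact cons_mem_antitoneTuples.2 ⟨by omega, hp.2⟩

lemma binomProd_zero (l : ℕ) : binomProd l 0 = 1 := by
  simp [binomProd]

lemma binomProd_cons (a : ℕ) (u : Fin l → ℕ) :
    binomProd (l + 1) (Fin.cons a u) = a.choose (headOrZero u) * binomProd l u := by
  simp only [binomProd, Fin.prod_univ_succ, headOrZero, Fin.cons_zero, Fin.cons_succ,
    Fin.val_zero, Fin.val_succ, add_lt_add_iff_right]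
  congr 1

def weightedBinomSum (l s b : ℕ) : ℕ :=
  ∑ u ∈ antitoneTuples l s, b.choose (headOrZero u) * binomProd l u

lemma sum_binomProd_cons (l s a : ℕ) :
    ∑ u ∈ antitoneTuples l s with headOrZero u ≤ a, binomProd (l + 1) (Fin.cons a u) =
      weightedBinomSum l s a := by
  simp only [binomProd_cons, weightedBinomSum]
  exact sum_filter_of_ne fun u _ hne =>
    not_lt.1 fun hlt => hne (by simp [Nat.choose_eq_zero_of_lt hlt])

lemma weightedBinomSum_sum_zero (l b : ℕ) : weightedBinomSum l 0 b = 1 := by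
  simp [weightedBinomSum, antitoneTuples_zero, binomProd_zero, headOrZero]

lemma weightedBinomSum_lead_zero (hs : s ≠ 0) : weightedBinomSum l s 0 = 0 := by
  refine sum_eq_zero fun u hu => ?_
  obtain ⟨hsum, hu⟩ := mem_antitoneTuples.1 hu
  have hpos : 0 < headOrZero u := by
    by_contra! h
    exact hs (hsum ▸ sum_eq_zero fun i _ => by have := le_headOrZero hu i; omega)
  rw [Nat.choose_eq_zero_of_lt hpos, zero_mul]

lemma weightedBinomSum_succ (l s b : ℕ) :
    weightedBinomSum (l + 1) s b =
      ∑ a ∈ range (s + 1), b.choose a * weightedBinomSum l (s - a) a := by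
  rw [weightedBinomSum, sum_antitoneTuples_succ]
  refine sum_congr rfl fun a _ => ?_
  rw [← sum_binomProd_cons, mul_sum]
  simp only [headOrZero_cons]

theorem weightedBinomSum_eq (b : ℕ) (hs : s ≤ l) :
    weightedBinomSum l s b = (b + s - 1).choose s := by
  induction l generalizing s b with
  | zero => rw [Nat.le_zero.1 hs, weightedBinomSum_sum_zero, Nat.choose_zero_right]
  | succ l ih =>
    rcases Nat.eq_zero_or_pos s with rfl | hs0
    · rw [weightedBinomSum_sum_zero, Nat.choose_zero_right]
    have term : ∀ a ∈ range (s + 1),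
        b.choose a * weightedBinomSum l (s - a) a = b.choose a * (s - 1).choose (s - a) := by
      intro a ha
      rcases Nat.eq_zero_or_pos a with rfl | ha0
      · rw [Nat.sub_zero, weightedBinomSum_lead_zero hs0.ne',
          Nat.choose_eq_zero_of_lt (Nat.sub_lt hs0 one_pos)]
      · rw [ih a (by omega), show a + (s - a) - 1 = s - 1 by grind]
    rw [weightedBinomSum_succ, sum_congr rfl term, show b + s - 1 = b + (s - 1) by omega,
      Nat.add_choose_eq, Nat.sum_antidiagonal_eq_sum_range_succ_mk]

end

theorem stmt3 (n : ℕ) (hn : 1 < n) :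
    ∑ t ∈ (partitionTuples n).filter (fun t => Odd (t ⟨0, Nat.zero_lt_of_lt hn⟩)),
      binomProd n t = 2 ^ (n - 2) := by
  obtain ⟨m, rfl⟩ : ∃ m, n = m + 1 := ⟨n - 1, by omega⟩
  have fiber : ∀ a ∈ range (m + 2),
      ∑ u ∈ antitoneTuples m (m + 1 - a) with headOrZero u ≤ a,
        (if Odd a then binomProd (m + 1) (Fin.cons a u) else 0) =
      if Odd a then m.choose (a - 1) else 0 := by
    intro a ha
    split_ifs with hodd
    · have ha0 : a ≠ 0 := by rintro rfl; simp at hodd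
      have ha1 : a ≤ m + 1 := Nat.lt_succ_iff.1 (mem_range.1 ha)
      rw [sum_binomProd_cons, weightedBinomSum_eq a (by omega),
        show a + (m + 1 - a) - 1 = m by omega,
        Nat.choose_symm_of_eq_add (show m = (m + 1 - a) + (a - 1) by omega)]
    · exact sum_const_zero
  rw [Fin.zero_eta, partitionTuples_eq_antitoneTuples, sum_filter, sum_antitoneTuples_succ]
  simp only [Fin.cons_zero]
  rw [sum_congr rfl fiber, sum_range_succ']
  simp [Nat.odd_add_one, ← sum_filter, sum_filter_even_choose (by omega : m ≠ 0)]
end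

section
/- For every integer n > 1, the sum over all weakly decreasing tuples (λ₁, λ₂, ..., λₙ) of nonnegative integers with λ₁ + λ₂ + ... + λₙ = n and λ₁ even of the product C(λ₁,λ₂)·C(λ₂,λ₃)···C(λₙ,0) equals 2^(n-2). -/
open Finset

/-! Since `C(a, b) = 0` for `a < b`, only weakly decreasing tuples contribute, so the sum may run over
all `n`-tuples summing to `n`. Peeling off entries one at a time and using Vandermonde's identity, the
tuples of length `m` summing to `s`, weighted by `C(k, λ₁)·C(λ₁, λ₂)⋯`, add up to the multiset number
`multichoose k s = C(k + s - 1, s)` as long as `s ≤ m` or `k = 0`. For `n = m + 1` and first entry `j`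
this gives `C(m, j - 1)` when `j ≥ 1` and `0` when `j = 0`, so the sum over even `j` is the sum of the
odd-index binomial coefficients of `m`, namely `2^(m-1)`. -/

lemma binomProd_succ (m : ℕ) (t : Fin (m + 1) → ℕ) :
    binomProd (m + 1) t = ∏ i : Fin m, (t i.castSucc).choose (t i.succ) := by
  rw [binomProd, Fin.prod_univ_castSucc]
  simp [Fin.succ]

lemma binomProd_cons_cons (m k j : ℕ) (t : Fin m → ℕ) :
    binomProd (m + 2) (Fin.cons k (Fin.cons j t)) =
      k.choose j * binomProd (m + 1) (Fin.cons j t) := by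
  simp [binomProd_succ, Fin.prod_univ_succ]

lemma antitone_of_binomProd_ne_zero {n : ℕ} {t : Fin n → ℕ} (h : binomProd n t ≠ 0) :
    Antitone t := by
  cases n with
  | zero => exact fun i => i.elim0
  | succ m =>
    rw [binomProd_succ, prod_ne_zero_iff] at h
    exact Fin.antitone_iff_succ_le.2 fun i => Nat.choose_ne_zero_iff.1 (h i (mem_univ i))

lemma sum_antidiagonalTuple_succ {M : Type*} [AddCommMonoid M] (m s : ℕ)
    (f : (Fin (m + 1) → ℕ) → M) :
    ∑ t ∈ Nat.antidiagonalTuple (m + 1) s, f t =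
      ∑ p ∈ antidiagonal s, ∑ u ∈ Nat.antidiagonalTuple m p.2, f (Fin.cons p.1 u) := by
  change ((List.Nat.antidiagonalTuple (m + 1) s).map f).sum =
    ((List.Nat.antidiagonal s).map fun p => ((List.Nat.antidiagonalTuple m p.2).map
      fun u => f (Fin.cons p.1 u)).sum).sum
  simp [List.Nat.antidiagonalTuple, List.flatMap_def, List.sum_flatten, List.map_flatten,
    Function.comp_def]

lemma Nat.multichoose_eq_sum_antidiagonal (k s : ℕ) :
    k.multichoose s = ∑ p ∈ antidiagonal s, k.choose p.1 * p.1.multichoose p.2 := by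
  rcases s with _ | s
  · simp
  rw [Nat.multichoose_eq, show k + (s + 1) - 1 = k + s by omega, Nat.add_choose_eq]
  refine sum_congr rfl fun p hp => ?_
  rw [HasAntidiagonal.mem_antidiagonal] at hp
  rw [Nat.multichoose_eq, show p.1 + p.2 - 1 = s by omega]

lemma sum_antidiagonalTuple_binomProd_cons (m s k : ℕ) (h : s ≤ m ∨ k = 0) :
    ∑ t ∈ Nat.antidiagonalTuple m s, binomProd (m + 1) (Fin.cons k t) = k.multichoose s := by
  induction m generalizing s k with
  | zero =>
    rcases s with _ | s
    · simp [binomProd_succ]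
    · obtain rfl : k = 0 := by omega
      simp
  | succ m ih =>
    rw [sum_antidiagonalTuple_succ, Nat.multichoose_eq_sum_antidiagonal]
    refine sum_congr rfl fun p hp => ?_
    rw [HasAntidiagonal.mem_antidiagonal] at hp
    simp only [binomProd_cons_cons, ← mul_sum]
    rcases Nat.eq_zero_or_pos p.1 with hj | hj
    · rw [ih _ _ (.inr hj)]
    rcases h with h | rfl
    · rw [ih _ _ (.inl (by omega))]
    · simp [Nat.choose_eq_zero_of_lt hj]

lemma sum_range_choose_odd {m : ℕ} (hm : m ≠ 0) :
    ∑ i ∈ range (m + 1), (if Odd i then m.choose i else 0) = 2 ^ (m - 1) := by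
  have key : (2 : ℤ) * ∑ i ∈ range (m + 1), (if Odd i then m.choose i else 0 : ℕ) = 2 ^ m := by
    calc _ = ∑ i ∈ range (m + 1), (m.choose i : ℤ) -
            ∑ i ∈ range (m + 1), (-1) ^ i * (m.choose i : ℤ) := by
          rw [Nat.cast_sum, mul_sum, ← sum_sub_distrib]
          refine sum_congr rfl fun i _ => ?_
          rcases Nat.even_or_odd i with hi | hi
          · simp [hi.neg_one_pow, Nat.not_odd_iff_even.2 hi]
          · simp [hi.neg_one_pow, hi]; ring
      _ = 2 ^ m := by
          rw [Int.alternating_sum_range_choose_of_ne hm, sub_zero]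
          exact_mod_cast Nat.sum_range_choose m
  obtain ⟨m, rfl⟩ := Nat.exists_eq_succ_of_ne_zero hm
  rw [pow_succ'] at key
  exact_mod_cast (mul_left_cancel₀ two_ne_zero key)

lemma sum_antidiagonal_even_multichoose (m : ℕ) :
    ∑ p ∈ antidiagonal (m + 1), (if Even p.1 then p.1.multichoose p.2 else 0) =
      ∑ i ∈ range (m + 1), (if Odd i then m.choose i else 0) := by
  rw [Nat.sum_antidiagonal_succ, Nat.sum_antidiagonal_eq_sum_range_succ_mk]
  simp only [Even.zero, if_true, Nat.multichoose_zero_succ, zero_add, Nat.even_add_one,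
    Nat.not_even_iff_odd]
  refine sum_congr rfl fun i hi => ?_
  rw [mem_range] at hi
  rw [Nat.multichoose_eq, show i + 1 + (m - i) - 1 = m by omega, Nat.choose_symm (by omega)]

lemma sum_filter_partitionTuples (n : ℕ) (p : (Fin n → ℕ) → Prop) [DecidablePred p] :
    ∑ t ∈ (partitionTuples n).filter p, binomProd n t =
      ∑ t ∈ (Nat.antidiagonalTuple n n).filter p, binomProd n t := by
  rw [partitionTuples, filter_comm]
  exact sum_filter_of_ne fun t _ h => antitone_of_binomProd_ne_zero h

theorem stmt4 (n : ℕ) (hn : 1 < n) :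
    ∑ t ∈ (partitionTuples n).filter (fun t => Even (t ⟨0, Nat.zero_lt_of_lt hn⟩)),
      binomProd n t = 2 ^ (n - 2) := by
  obtain ⟨m, rfl⟩ : ∃ m, n = m + 1 := ⟨n - 1, by omega⟩
  rw [sum_filter_partitionTuples, sum_filter, sum_antidiagonalTuple_succ]
  simp only [Fin.zero_eta, Fin.cons_zero, ← ite_sum_zero]
  have hm : m ≠ 0 := by omega
  calc _ = ∑ p ∈ antidiagonal (m + 1), (if Even p.1 then p.1.multichoose p.2 else 0) := by
        refine sum_congr rfl fun p hp => ?_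
        rw [HasAntidiagonal.mem_antidiagonal] at hp
        rw [sum_antidiagonalTuple_binomProd_cons _ _ _ (by omega)]
    _ = 2 ^ (m - 1) := by rw [sum_antidiagonal_even_multichoose, sum_range_choose_odd hm]
end

section
/- For every integer n > 1, the sum over all weakly decreasing tuples (λ₁, λ₂, ..., λₙ) of nonnegative integers with λ₁ + λ₂ + ... + λₙ = n and λ₁ even of the product C(λ₁,λ₂)·C(λ₂,λ₃)···C(λₙ,0) multiplied by the rational number n/λ₁ equals 2^(n-1) − 1. -/
/-!
Group the partitions of `n` by their first part `k`. Removing the first part of a partition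
with first part `k` and second part `j ≤ k` leaves a partition of `n - k` with first part `j`,
and the product of binomials only changes by the factor `C(k, j)`. So the weighted count
`F(n, k)` satisfies `F(n, k) = ∑ⱼ C(k, j) F(n - k, j)`, and by Vandermonde's identity
`F(n, k) = C(n - 1, k - 1)` for `k ≥ 1`. Hence `(n / k) F(n, k) = C(n, k)`, and the sum is the
sum of `C(n, k)` over even `k ≥ 2`, that is `2 ^ (n - 1) - 1`.
-/

open Finset

def decreasingTuples (m n : ℕ) : Finset (Fin m → ℕ) :=
  (Finset.Nat.antidiagonalTuple m n).filter fun t => ∀ i j : Fin m, i ≤ j → t j ≤ t i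

theorem mem_decreasingTuples {m n : ℕ} {t : Fin m → ℕ} :
    t ∈ decreasingTuples m n ↔ ∑ i, t i = n ∧ Antitone t := by
  simp only [decreasingTuples, mem_filter, Nat.mem_antidiagonalTuple]
  rfl

theorem cons_mem_decreasingTuples {m n k : ℕ} {s : Fin (m + 1) → ℕ} :
    Fin.cons k s ∈ decreasingTuples (m + 2) (k + n) ↔
      s ∈ decreasingTuples (m + 1) n ∧ s 0 ≤ k := by
  simp only [mem_decreasingTuples, Fin.sum_cons, Nat.add_left_cancel_iff]
  rw [show Antitone (Fin.cons k s : Fin (m + 2) → ℕ) ↔ s 0 ≤ k ∧ Antitone s from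
    antitone_vecCons]
  tauto

theorem head_le_of_mem_decreasingTuples {m n : ℕ} {t : Fin (m + 1) → ℕ}
    (ht : t ∈ decreasingTuples (m + 1) n) : t 0 ≤ n :=
  (mem_decreasingTuples.1 ht).1 ▸ single_le_sum (fun i _ => Nat.zero_le (t i)) (mem_univ 0)

theorem binomProd_cons_s6 (k : ℕ) {m : ℕ} (s : Fin (m + 1) → ℕ) :
    binomProd (m + 2) (Fin.cons k s) = k.choose (s 0) * binomProd (m + 1) s := by
  rw [binomProd, Fin.prod_univ_succ, binomProd]
  congr 1
  refine prod_congr rfl fun j _ => ?_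
  by_cases h : (j : ℕ) + 1 < m + 1
  · have h' : (j.succ : ℕ) + 1 < m + 2 := by simpa using h
    rw [dif_pos h, dif_pos h', Fin.cons_succ, ← Fin.cons_succ (α := fun _ => ℕ) k s ⟨_, h⟩]
    rfl
  · simp [h]

theorem binomProd_single {m : ℕ} (n : ℕ) : binomProd (m + 1) (Pi.single 0 n) = 1 := by
  refine prod_eq_one fun i _ => ?_
  split_ifs with h
  · rw [Pi.single_eq_of_ne (i' := ⟨_, h⟩) (Fin.ne_of_val_ne (Nat.succ_ne_zero _)),
      Nat.choose_zero_right]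
  · exact Nat.choose_zero_right _

def headSum (m n k : ℕ) : ℕ :=
  ∑ t ∈ (decreasingTuples (m + 1) n).filter (· 0 = k), binomProd (m + 1) t

theorem headSum_eq_zero_of_lt {m n k : ℕ} (h : n < k) : headSum m n k = 0 := by
  refine sum_eq_zero fun t ht => absurd ?_ h.not_ge
  obtain ⟨hmem, rfl⟩ := mem_filter.1 ht
  exact head_le_of_mem_decreasingTuples hmem

theorem headSum_zero {m n : ℕ} (hn : n ≠ 0) : headSum m n 0 = 0 := by
  refine sum_eq_zero fun t ht => ?_
  obtain ⟨ht, h0⟩ := mem_filter.1 ht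
  obtain ⟨hsum, hanti⟩ := mem_decreasingTuples.1 ht
  have : ∑ i, t i = 0 := sum_eq_zero fun i _ => Nat.le_zero.1 (h0 ▸ hanti (Fin.zero_le i))
  omega

theorem headSum_self (m n : ℕ) : headSum m n n = 1 := by
  suffices (decreasingTuples (m + 1) n).filter (· 0 = n) = {Pi.single 0 n} by
    rw [headSum, this, sum_singleton, binomProd_single]
  refine eq_singleton_iff_unique_mem.2 ⟨?_, fun t ht => ?_⟩
  · refine mem_filter.2 ⟨mem_decreasingTuples.2 ⟨by simp, fun i j hij => ?_⟩, by simp⟩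
    rcases eq_or_ne j 0 with rfl | hj
    · rw [Fin.le_zero_iff.1 hij]
    · simp [Pi.single_apply, hj]
  · obtain ⟨ht, h0⟩ := mem_filter.1 ht
    have hsum := (mem_decreasingTuples.1 ht).1
    rw [Fin.sum_univ_succ, h0, Nat.add_eq_left, sum_eq_zero_iff] at hsum
    ext i
    cases i using Fin.cases with
    | zero => simpa using h0
    | succ i => simpa using hsum i (mem_univ i)

theorem sum_decreasingTuples_mul_head {R : Type*} [CommSemiring R] (m n : ℕ) (φ : ℕ → R) :
    ∑ t ∈ decreasingTuples (m + 1) n, (binomProd (m + 1) t : R) * φ (t 0)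
      = ∑ k ∈ range (n + 1), (headSum m n k : R) * φ k := by
  rw [← sum_fiberwise_of_maps_to fun t ht =>
    mem_range_succ_iff.2 (head_le_of_mem_decreasingTuples ht)]
  refine sum_congr rfl fun k _ => ?_
  rw [headSum, Nat.cast_sum, sum_mul]
  exact sum_congr rfl fun t ht => by rw [(mem_filter.1 ht).2]

theorem sum_filter_decreasingTuples_mul_head {R : Type*} [CommSemiring R] (m n : ℕ)
    (p : ℕ → Prop) [DecidablePred p] (φ : ℕ → R) :
    ∑ t ∈ (decreasingTuples (m + 1) n).filter (fun t => p (t 0)),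
        (binomProd (m + 1) t : R) * φ (t 0)
      = ∑ k ∈ (range (n + 1)).filter p, (headSum m n k : R) * φ k := by
  simpa only [sum_filter, mul_ite, mul_zero]
    using sum_decreasingTuples_mul_head m n fun k => if p k then φ k else 0

theorem headSum_succ (m k n : ℕ) :
    headSum (m + 1) (k + n) k = ∑ j ∈ range (n + 1), headSum m n j * k.choose j := by
  have hhead : ∀ t ∈ (decreasingTuples (m + 2) (k + n)).filter (· 0 = k),
      Fin.cons k (Fin.tail t) = t := fun t ht => by
    rw [← (mem_filter.1 ht).2, Fin.cons_self_tail]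
  have htail : headSum (m + 1) (k + n) k
      = ∑ s ∈ (decreasingTuples (m + 1) n).filter (· 0 ≤ k),
          binomProd (m + 1) s * k.choose (s 0) := by
    refine sum_nbij' Fin.tail (fun s => Fin.cons k s) (fun t ht => ?_) (fun s hs => ?_) hhead
      (fun s _ => Fin.tail_cons (α := fun _ => ℕ) k s) (fun t ht => ?_)
    · have ht' := (mem_filter.1 ht).1
      rw [← hhead t ht] at ht'
      exact mem_filter.2 (cons_mem_decreasingTuples.1 ht')
    · exact mem_filter.2 ⟨cons_mem_decreasingTuples.2 (mem_filter.1 hs), Fin.cons_zero _ _⟩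
    · conv_lhs => rw [← hhead t ht, binomProd_cons_s6]
      rw [mul_comm]
  -- the constraint `s 0 ≤ k` is carried by the factor `C(k, s 0)`
  have hdrop : ∑ s ∈ (decreasingTuples (m + 1) n).filter (· 0 ≤ k),
        binomProd (m + 1) s * k.choose (s 0)
      = ∑ s ∈ decreasingTuples (m + 1) n, binomProd (m + 1) s * k.choose (s 0) :=
    sum_filter_of_ne fun s _ h =>
      by_contra fun hs => h (by rw [Nat.choose_eq_zero_of_lt (not_le.1 hs), mul_zero])
  rw [htail, hdrop]
  simpa using sum_decreasingTuples_mul_head m n (k.choose ·)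

theorem headSum_eq_choose {m n k : ℕ} (hk : k ≠ 0) (hn : n ≠ 0) (hnm : n ≤ m + 1) :
    headSum m n k = (n - 1).choose (k - 1) := by
  induction n using Nat.strong_induction_on generalizing m k with
  | _ n ih =>
  rcases lt_trichotomy k n with hlt | rfl | hgt
  · obtain ⟨a, rfl⟩ : ∃ a, n = k + (a + 1) := ⟨n - k - 1, by omega⟩
    obtain ⟨m, rfl⟩ : ∃ m', m = m' + 1 := ⟨m - 1, by omega⟩
    have hfiber : ∀ j ∈ range (a + 2), headSum m (a + 1) j = a.choose (a + 1 - j) := by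
      intro j hj
      rcases eq_or_ne j 0 with rfl | hj0
      · rw [headSum_zero a.succ_ne_zero, Nat.choose_eq_zero_of_lt (by omega)]
      · rw [ih (a + 1) (by omega) hj0 a.succ_ne_zero (by omega), Nat.add_sub_cancel,
          ← Nat.choose_symm (by simp at hj; omega)]
        congr 1
        omega
    rw [headSum_succ, sum_congr rfl fun j hj => by rw [hfiber j hj, mul_comm],
      ← Nat.sum_antidiagonal_eq_sum_range_succ (fun i l => k.choose i * a.choose l),
      ← Nat.add_choose_eq, ← Nat.choose_symm (by omega)]
    congr 1
    omega
  · rw [headSum_self, Nat.choose_self]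
  · rw [headSum_eq_zero_of_lt hgt, Nat.choose_eq_zero_of_lt (by omega)]

theorem headSum_mul_div {K : Type*} [Field K] [CharZero K] {m n : ℕ} (k : ℕ) (hn : n ≠ 0)
    (hnm : n ≤ m + 1) : (headSum m n k : K) * (n / k) = n.choose k - if k = 0 then 1 else 0 := by
  rcases eq_or_ne k 0 with rfl | hk
  · simp [headSum_zero hn]
  obtain ⟨n, rfl⟩ := Nat.exists_eq_succ_of_ne_zero hn
  obtain ⟨k, rfl⟩ := Nat.exists_eq_succ_of_ne_zero hk
  have hpascal : ((n + 1) * n.choose k : K) = (n + 1).choose (k + 1) * (k + 1) := by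
    exact_mod_cast Nat.add_one_mul_choose_eq n k
  rw [headSum_eq_choose hk hn hnm, if_neg hk, sub_zero]
  field_simp
  simpa [mul_comm] using hpascal

theorem sum_range_filter_even_choose {n : ℕ} (hn : n ≠ 0) :
    ∑ k ∈ (range (n + 1)).filter Even, n.choose k = 2 ^ (n - 1) := by
  have hdouble :
      2 * ∑ k ∈ (range (n + 1)).filter Even, (n.choose k : ℤ) = 2 * 2 ^ (n - 1) := by
    calc 2 * ∑ k ∈ (range (n + 1)).filter Even, (n.choose k : ℤ)
        = ∑ k ∈ range (n + 1), ((n.choose k : ℤ) + (-1) ^ k * n.choose k) := by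
          rw [sum_filter, mul_sum]
          refine sum_congr rfl fun k _ => ?_
          rcases k.even_or_odd with hk | hk
          · rw [if_pos hk, hk.neg_one_pow]; ring
          · rw [if_neg (Nat.not_even_iff_odd.2 hk), hk.neg_one_pow]; ring
      _ = 2 * 2 ^ (n - 1) := by
          rw [sum_add_distrib, Int.alternating_sum_range_choose_of_ne hn, add_zero, ← pow_succ',
            Nat.sub_add_cancel (Nat.one_le_iff_ne_zero.2 hn)]
          exact_mod_cast Nat.sum_range_choose n
  exact_mod_cast mul_left_cancel₀ two_ne_zero hdouble

theorem stmt6 (n : ℕ) (hn : 1 < n) :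
    ∑ t ∈ (partitionTuples n).filter (fun t => Even (t ⟨0, Nat.zero_lt_of_lt hn⟩)),
      (binomProd n t : ℚ) * ((n : ℚ) / (t ⟨0, Nat.zero_lt_of_lt hn⟩ : ℚ))
      = 2 ^ (n - 1) - 1 := by
  obtain ⟨N, rfl⟩ : ∃ N, n = N + 1 := ⟨n - 1, by omega⟩
  change ∑ t ∈ (decreasingTuples (N + 1) (N + 1)).filter (fun t => Even (t 0)),
      (binomProd (N + 1) t : ℚ) * (((N + 1 : ℕ) : ℚ) / (t 0 : ℚ)) = 2 ^ N - 1
  rw [sum_filter_decreasingTuples_mul_head N (N + 1) Even fun k => ((N + 1 : ℕ) : ℚ) / k,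
    sum_congr rfl fun k _ => headSum_mul_div k N.succ_ne_zero le_rfl, sum_sub_distrib,
    ← Nat.cast_sum, sum_range_filter_even_choose N.succ_ne_zero]
  simp
end
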